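/- Let M and R be real 2×2 matrices such that M11 = max{M11, M12, M21, M22}, M22 < M11, and not all of M11, M12, M21 are equal, and such that R22 = max{R11, R12, R21, R22}, R11 < R22, and not all of R22, R12, R21 are equal. Let D be the digraph on the six distinct vertices x, x', x'', y, y', y'' with arcs xx', x'x'', x''x each carrying cost 1 and matrix M, and arcs yy', y'y'', y''y each carrying cost 1 and matrix R. Then the partition P with X1 = {x, x', x''} and X2 = {y, y', y''} is the unique partition of V(D) maximizing w^P(D), and its weight is 3·M11 + 3·R22. -/
import Mathlib


/-- The weight `w^P(uv)` of an arc from `u` to `v` carrying cost `1` and matrix `M`,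
under the partition `P = (X1, V \ X1)`. -/
def arcW {V : Type*} [DecidableEq V] (X1 : Finset V)
    (M : Matrix (Fin 2) (Fin 2) ℝ) (u v : V) : ℝ :=
  if u ∈ X1 then (if v ∈ X1 then M 0 0 else M 0 1)
  else (if v ∈ X1 then M 1 0 else M 1 1)

section helpers

variable {V : Type*} [DecidableEq V] (X1 : Finset V)

lemma triM_le (M : Matrix (Fin 2) (Fin 2) ℝ)
    (hMmax : M 0 0 = max (max (M 0 0) (M 0 1)) (max (M 1 0) (M 1 1)))
    (a b c : V) :
    arcW X1 M a b + arcW X1 M b c + arcW X1 M c a ≤ 3 * M 0 0 := by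
  have h1 : M 0 1 ≤ M 0 0 := by rw [hMmax]; exact le_max_of_le_left (le_max_right _ _)
  have h2 : M 1 0 ≤ M 0 0 := by rw [hMmax]; exact le_max_of_le_right (le_max_left _ _)
  have h3 : M 1 1 ≤ M 0 0 := by rw [hMmax]; exact le_max_of_le_right (le_max_right _ _)
  unfold arcW
  by_cases ha : a ∈ X1 <;> by_cases hb : b ∈ X1 <;> by_cases hc : c ∈ X1 <;>
    simp [ha, hb, hc] <;> linarith

lemma triM_lt (M : Matrix (Fin 2) (Fin 2) ℝ)
    (hMmax : M 0 0 = max (max (M 0 0) (M 0 1)) (max (M 1 0) (M 1 1)))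
    (hM22 : M 1 1 < M 0 0)
    (hMne : ¬(M 0 0 = M 0 1 ∧ M 0 0 = M 1 0))
    (a b c : V) (h : ¬(a ∈ X1 ∧ b ∈ X1 ∧ c ∈ X1)) :
    arcW X1 M a b + arcW X1 M b c + arcW X1 M c a < 3 * M 0 0 := by
  have h1 : M 0 1 ≤ M 0 0 := by rw [hMmax]; exact le_max_of_le_left (le_max_right _ _)
  have h2 : M 1 0 ≤ M 0 0 := by rw [hMmax]; exact le_max_of_le_right (le_max_left _ _)
  have h4 : M 0 1 < M 0 0 ∨ M 1 0 < M 0 0 := by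
    rcases lt_or_eq_of_le h1 with h | h
    · exact Or.inl h
    · rcases lt_or_eq_of_le h2 with h' | h'
      · exact Or.inr h'
      · exact absurd ⟨h.symm, h'.symm⟩ hMne
  unfold arcW
  by_cases ha : a ∈ X1 <;> by_cases hb : b ∈ X1 <;> by_cases hc : c ∈ X1 <;>
    simp [ha, hb, hc] at h ⊢ <;> rcases h4 with h4 | h4 <;> linarith

lemma triR_le (R : Matrix (Fin 2) (Fin 2) ℝ)
    (hRmax : R 1 1 = max (max (R 0 0) (R 0 1)) (max (R 1 0) (R 1 1)))
    (a b c : V) :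
    arcW X1 R a b + arcW X1 R b c + arcW X1 R c a ≤ 3 * R 1 1 := by
  have h1 : R 0 1 ≤ R 1 1 := by rw [hRmax]; exact le_max_of_le_left (le_max_right _ _)
  have h2 : R 1 0 ≤ R 1 1 := by rw [hRmax]; exact le_max_of_le_right (le_max_left _ _)
  have h3 : R 0 0 ≤ R 1 1 := by rw [hRmax]; exact le_max_of_le_left (le_max_left _ _)
  unfold arcW
  by_cases ha : a ∈ X1 <;> by_cases hb : b ∈ X1 <;> by_cases hc : c ∈ X1 <;>
    simp [ha, hb, hc] <;> linarith

lemma triR_lt (R : Matrix (Fin 2) (Fin 2) ℝ)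
    (hRmax : R 1 1 = max (max (R 0 0) (R 0 1)) (max (R 1 0) (R 1 1)))
    (hR11 : R 0 0 < R 1 1)
    (hRne : ¬(R 1 1 = R 0 1 ∧ R 1 1 = R 1 0))
    (a b c : V) (h : ¬(a ∉ X1 ∧ b ∉ X1 ∧ c ∉ X1)) :
    arcW X1 R a b + arcW X1 R b c + arcW X1 R c a < 3 * R 1 1 := by
  have h1 : R 0 1 ≤ R 1 1 := by rw [hRmax]; exact le_max_of_le_left (le_max_right _ _)
  have h2 : R 1 0 ≤ R 1 1 := by rw [hRmax]; exact le_max_of_le_right (le_max_left _ _)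
  have h4 : R 0 1 < R 1 1 ∨ R 1 0 < R 1 1 := by
    rcases lt_or_eq_of_le h1 with h | h
    · exact Or.inl h
    · rcases lt_or_eq_of_le h2 with h' | h'
      · exact Or.inr h'
      · exact absurd ⟨h.symm, h'.symm⟩ hRne
  unfold arcW
  by_cases ha : a ∈ X1 <;> by_cases hb : b ∈ X1 <;> by_cases hc : c ∈ X1 <;>
    simp [ha, hb, hc] at h ⊢ <;> rcases h4 with h4 | h4 <;> linarith

end helpers

/-- Case 1 of Theorem 5: two disjoint directed triangles `x → x' → x'' → x` (matrix `M`)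
and `y → y' → y'' → y` (matrix `R`), all costs `1`.  If `M11` is the maximum entry of `M`,
`M22 < M11` and `M11, M12, M21` are not all equal, while `R22` is the maximum entry of
`R`, `R11 < R22` and `R22, R12, R21` are not all equal, then `X1 = {x, x', x''}`
(with `X2 = {y, y', y''}`) is the unique optimal partition, of weight `3·M11 + 3·R22`. -/
theorem two_triangles_unique_optimum {V : Type*} [Fintype V] [DecidableEq V]
    (x x' x'' y y' y'' : V)
    (hnodup : ([x, x', x'', y, y', y''] : List V).Nodup)
    (huniv : (Finset.univ : Finset V) = {x, x', x'', y, y', y''})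
    (M R : Matrix (Fin 2) (Fin 2) ℝ)
    (hMmax : M 0 0 = max (max (M 0 0) (M 0 1)) (max (M 1 0) (M 1 1)))
    (hM22 : M 1 1 < M 0 0)
    (hMne : ¬(M 0 0 = M 0 1 ∧ M 0 0 = M 1 0))
    (hRmax : R 1 1 = max (max (R 0 0) (R 0 1)) (max (R 1 0) (R 1 1)))
    (hR11 : R 0 0 < R 1 1)
    (hRne : ¬(R 1 1 = R 0 1 ∧ R 1 1 = R 1 0)) :
    (fun X1 : Finset V =>
        arcW X1 M x x' + arcW X1 M x' x'' + arcW X1 M x'' x +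
        arcW X1 R y y' + arcW X1 R y' y'' + arcW X1 R y'' y)
        ({x, x', x''} : Finset V) = 3 * M 0 0 + 3 * R 1 1 ∧
    ∀ X1 : Finset V, X1 ≠ ({x, x', x''} : Finset V) →
      (arcW X1 M x x' + arcW X1 M x' x'' + arcW X1 M x'' x +
        arcW X1 R y y' + arcW X1 R y' y'' + arcW X1 R y'' y)
        < 3 * M 0 0 + 3 * R 1 1 := by
  simp only [List.nodup_cons, List.mem_cons, List.not_mem_nil, or_false,
    List.mem_singleton, List.nodup_nil, and_true] at hnodup
  obtain ⟨hx, hx', hx'', hy, hy', -⟩ := hnodup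
  push_neg at hx hx' hx'' hy
  obtain ⟨n12, n13, n14, n15, n16⟩ := hx
  obtain ⟨n23, n24, n25, n26⟩ := hx'
  obtain ⟨n34, n35, n36⟩ := hx''
  obtain ⟨n45, n46⟩ := hy
  have m41 : y ≠ x := n14.symm
  have m42 : y ≠ x' := n24.symm
  have m43 : y ≠ x'' := n34.symm
  have m51 : y' ≠ x := n15.symm
  have m52 : y' ≠ x' := n25.symm
  have m53 : y' ≠ x'' := n35.symm
  have m61 : y'' ≠ x := n16.symm
  have m62 : y'' ≠ x' := n26.symm
  have m63 : y'' ≠ x'' := n36.symm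
  constructor
  · simp only [arcW, Finset.mem_insert, Finset.mem_singleton]
    simp [m41, m42, m43, m51, m52, m53, m61, m62, m63]
    ring
  · intro X1 hX1
    by_cases hcase : (x ∈ X1 ∧ x' ∈ X1 ∧ x'' ∈ X1) ∧ (y ∉ X1 ∧ y' ∉ X1 ∧ y'' ∉ X1)
    · exfalso
      apply hX1
      ext v
      have hv : v = x ∨ v = x' ∨ v = x'' ∨ v = y ∨ v = y' ∨ v = y'' := by
        have := Finset.mem_univ v
        rw [huniv] at this
        simpa using this
      obtain ⟨⟨h1, h2, h3⟩, h4, h5, h6⟩ := hcase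
      simp only [Finset.mem_insert, Finset.mem_singleton]
      rcases hv with rfl | rfl | rfl | rfl | rfl | rfl
      · simp [h1]
      · simp [h2]
      · simp [h3]
      · simp [h4, m41, m42, m43]
      · simp [h5, m51, m52, m53]
      · simp [h6, m61, m62, m63]
    · rw [not_and_or] at hcase
      rcases hcase with hcase | hcase
      · have hlt := triM_lt X1 M hMmax hM22 hMne x x' x'' hcase
        have hle := triR_le X1 R hRmax y y' y''
        linarith
      · have hlt := triR_lt X1 R hRmax hR11 hRne y y' y'' hcase
        have hle := triM_le X1 M hMmax x x' x''
        linarith
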